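/- arXiv:2103.09722 — 4 statements merged into one kernel-verified Lean document; each statement's English description precedes it below -/
import Mathlib

section
/- Let q ≥ 2 be odd and let (P, L) be a finite projective plane of order q. Consider vectors x : L → F₂ such that for every point p ∈ P the sum Σ_{ℓ ∈ L, p ∈ ℓ} x(ℓ) equals 0 in F₂ (i.e., x lies in the right kernel of the incidence matrix over F₂). Then the only such vectors are the zero vector and the all-ones vector. In particular this kernel is a 1-dimensional F₂-subspace and its unique nonzero element has Hamming weight q²+q+1. -/
/-- A finite projective plane of order `q`, given by its set of lines (each line a
finite set of points of the ambient point type `P`): any two distinct points lie on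
exactly one common line, any two distinct lines meet in exactly one point, there are
four points no three of which are collinear, and every line has `q + 1` points. -/
structure IsProjectivePlane (q : ℕ) {P : Type} [DecidableEq P] (L : Finset (Finset P)) : Prop where
  exists_unique_line : ∀ p₁ p₂ : P, p₁ ≠ p₂ → ∃! ℓ, ℓ ∈ L ∧ p₁ ∈ ℓ ∧ p₂ ∈ ℓ
  exists_unique_point : ∀ ℓ₁ ∈ L, ∀ ℓ₂ ∈ L, ℓ₁ ≠ ℓ₂ → ∃! p, p ∈ ℓ₁ ∧ p ∈ ℓ₂
  nondeg : ∃ a b c d : P, a ≠ b ∧ a ≠ c ∧ a ≠ d ∧ b ≠ c ∧ b ≠ d ∧ c ≠ d ∧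
      ∀ ℓ ∈ L, (ℓ ∩ ({a, b, c, d} : Finset P)).card ≤ 2
  card_line : ∀ ℓ ∈ L, ℓ.card = q + 1

/-- An oval: a set of `q + 1` points such that every line contains at most two of them. -/
def IsOval (q : ℕ) {P : Type} [DecidableEq P] (L : Finset (Finset P)) (O : Finset P) : Prop :=
  O.card = q + 1 ∧ ∀ ℓ ∈ L, (ℓ ∩ O).card ≤ 2

/-- A projective bundle: a set of `q² + q + 1` ovals, any two of which meet in
exactly one point. -/
def IsProjectiveBundle (q : ℕ) {P : Type} [DecidableEq P] (L : Finset (Finset P))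
    (B : Finset (Finset P)) : Prop :=
  B.card = q ^ 2 + q + 1 ∧ (∀ o ∈ B, IsOval q L o) ∧
    ∀ o₁ ∈ B, ∀ o₂ ∈ B, o₁ ≠ o₂ → (o₁ ∩ o₂).card = 1

/-!
If `N` is the point-line incidence matrix, then `Nᵀ N = J + q I`: two distinct lines meet in
exactly one point and a line has `q + 1` points. Hence `N x = 0` gives `∑ x + q x_ℓ = 0` for
every line `ℓ`; over `F₂` with `q` odd this says `x_ℓ = ∑ x`, so `x` is constant. Conversely the
all-ones vector lies in the kernel because every point is on `q + 1` lines, an even number.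
-/

open Configuration Finset

lemma Finset.notMem_of_card_inter_le_two {α : Type*} [DecidableEq α] {ℓ s : Finset α}
    (h : #(ℓ ∩ s) ≤ 2) {x y z : α} (hx : x ∈ s) (hy : y ∈ s) (hz : z ∈ s)
    (hxy : x ≠ y) (hxz : x ≠ z) (hyz : y ≠ z) (hxℓ : x ∈ ℓ) (hyℓ : y ∈ ℓ) : z ∉ ℓ := by
  intro hzℓ
  have hsub : {x, y, z} ⊆ ℓ ∩ s := by
    simp only [insert_subset_iff, singleton_subset_iff, mem_inter]
    exact ⟨⟨hxℓ, hx⟩, ⟨hyℓ, hy⟩, ⟨hzℓ, hz⟩⟩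
  have := card_le_card hsub
  rw [card_eq_three.mpr ⟨x, y, z, hxy, hxz, hyz, rfl⟩] at this
  omega

namespace IsProjectivePlane

variable {q : ℕ} {P : Type} [DecidableEq P] {L : Finset (Finset P)}

instance : Membership P {ℓ // ℓ ∈ L} := ⟨fun ℓ p => p ∈ ℓ.1⟩

theorem eq_of_mem_of_mem (hL : IsProjectivePlane q L) {p₁ p₂ : P} {ℓ₁ ℓ₂ : Finset P}
    (h₁ : ℓ₁ ∈ L) (h₂ : ℓ₂ ∈ L) (hp : p₁ ≠ p₂) (h₁₁ : p₁ ∈ ℓ₁) (h₂₁ : p₂ ∈ ℓ₁)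
    (h₁₂ : p₁ ∈ ℓ₂) (h₂₂ : p₂ ∈ ℓ₂) : ℓ₁ = ℓ₂ :=
  (hL.exists_unique_line p₁ p₂ hp).unique ⟨h₁, h₁₁, h₂₁⟩ ⟨h₂, h₁₂, h₂₂⟩

theorem exists_point_notMem (hL : IsProjectivePlane q L) {ℓ : Finset P} (hℓ : ℓ ∈ L) :
    ∃ p, p ∉ ℓ := by
  obtain ⟨a, b, c, d, hab, hac, -, hbc, -, -, hquad⟩ := hL.nondeg
  by_cases ha : a ∈ ℓ
  · by_cases hb : b ∈ ℓ
    · exact ⟨c, notMem_of_card_inter_le_two (hquad ℓ hℓ) (by simp) (by simp) (by simp)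
        hab hac hbc ha hb⟩
    · exact ⟨b, hb⟩
  · exact ⟨a, ha⟩

theorem exists_line_notMem (hL : IsProjectivePlane q L) (p : P) : ∃ ℓ ∈ L, p ∉ ℓ := by
  obtain ⟨a, b, c, d, hab, hac, had, hbc, hbd, hcd, hquad⟩ := hL.nondeg
  obtain ⟨ℓab, hℓab, haab, hbab⟩ := (hL.exists_unique_line a b hab).exists
  obtain ⟨ℓcd, hℓcd, hccd, hdcd⟩ := (hL.exists_unique_line c d hcd).exists
  obtain ⟨ℓac, hℓac, haac, hcac⟩ := (hL.exists_unique_line a c hac).exists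
  by_cases hpab : p ∈ ℓab
  · by_cases hpcd : p ∈ ℓcd
    · refine ⟨ℓac, hℓac, fun hpac => ?_⟩
      -- `p` is the intersection of `ab` and `cd`; if it were on `ac` then `ab = ac ∋ c`.
      have hacd : a ∉ ℓcd := notMem_of_card_inter_le_two (hquad ℓcd hℓcd) (by simp) (by simp)
        (by simp) hcd hac.symm had.symm hccd hdcd
      have hcab : c ∉ ℓab := notMem_of_card_inter_le_two (hquad ℓab hℓab) (by simp) (by simp)
        (by simp) hab hac hbc haab hbab
      have hpa : a ≠ p := fun h => hacd (h ▸ hpcd)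
      exact hcab (hL.eq_of_mem_of_mem hℓac hℓab hpa haac hpac haab hpab ▸ hcac)
    · exact ⟨ℓcd, hℓcd, hpcd⟩
  · exact ⟨ℓab, hℓab, hpab⟩

theorem exists_config (hL : IsProjectivePlane q L) :
    ∃ (p₁ p₂ p₃ : P) (l₁ l₂ l₃ : {ℓ // ℓ ∈ L}),
      p₁ ∉ l₂ ∧ p₁ ∉ l₃ ∧ p₂ ∉ l₁ ∧ p₂ ∈ l₂ ∧ p₂ ∈ l₃ ∧ p₃ ∉ l₁ ∧ p₃ ∈ l₂ ∧ p₃ ∉ l₃ := by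
  obtain ⟨a, b, c, d, hab, hac, had, hbc, hbd, hcd, hquad⟩ := hL.nondeg
  obtain ⟨ℓab, hℓab, haab, hbab⟩ := (hL.exists_unique_line a b hab).exists
  obtain ⟨ℓad, hℓad, haad, hdad⟩ := (hL.exists_unique_line a d had).exists
  obtain ⟨ℓcd, hℓcd, hccd, hdcd⟩ := (hL.exists_unique_line c d hcd).exists
  refine ⟨c, a, b, ⟨ℓcd, hℓcd⟩, ⟨ℓab, hℓab⟩, ⟨ℓad, hℓad⟩, ?_, ?_, ?_, haab, haad, ?_, hbab, ?_⟩
  · exact notMem_of_card_inter_le_two (hquad ℓab hℓab) (by simp) (by simp) (by simp)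
      hab hac hbc haab hbab
  · exact notMem_of_card_inter_le_two (hquad ℓad hℓad) (by simp) (by simp) (by simp)
      had hac hcd.symm haad hdad
  · exact notMem_of_card_inter_le_two (hquad ℓcd hℓcd) (by simp) (by simp) (by simp)
      hcd hac.symm had.symm hccd hdcd
  · exact notMem_of_card_inter_le_two (hquad ℓcd hℓcd) (by simp) (by simp) (by simp)
      hcd hbc.symm hbd.symm hccd hdcd
  · exact notMem_of_card_inter_le_two (hquad ℓad hℓad) (by simp) (by simp) (by simp)
      had hab hbd.symm haad hdad

@[reducible]
noncomputable def toProjectivePlane (hL : IsProjectivePlane q L) :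
    ProjectivePlane P {ℓ // ℓ ∈ L} where
  exists_point ℓ := hL.exists_point_notMem ℓ.2
  exists_line p := by
    obtain ⟨ℓ, hℓ, hp⟩ := hL.exists_line_notMem p
    exact ⟨⟨ℓ, hℓ⟩, hp⟩
  eq_or_eq {p₁ p₂ ℓ₁ ℓ₂} h₁₁ h₂₁ h₁₂ h₂₂ :=
    or_iff_not_imp_left.mpr fun hp =>
      Subtype.ext (hL.eq_of_mem_of_mem ℓ₁.2 ℓ₂.2 hp h₁₁ h₂₁ h₁₂ h₂₂)
  mkPoint {ℓ₁ ℓ₂} h := (hL.exists_unique_point ℓ₁.1 ℓ₁.2 ℓ₂.1 ℓ₂.2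
    (Subtype.coe_injective.ne h)).exists.choose
  mkPoint_ax {ℓ₁ ℓ₂} h := (hL.exists_unique_point ℓ₁.1 ℓ₁.2 ℓ₂.1 ℓ₂.2
    (Subtype.coe_injective.ne h)).exists.choose_spec
  mkLine {p₁ p₂} h := ⟨_, (hL.exists_unique_line p₁ p₂ h).exists.choose_spec.1⟩
  mkLine_ax {p₁ p₂} h := (hL.exists_unique_line p₁ p₂ h).exists.choose_spec.2
  exists_config := hL.exists_config

theorem order_eq [Finite P] (hL : IsProjectivePlane q L) :
    letI := hL.toProjectivePlane
    ProjectivePlane.order P {ℓ // ℓ ∈ L} = q := by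
  let := hL.toProjectivePlane
  obtain ⟨a, -⟩ := hL.nondeg
  obtain ⟨ℓ, hℓ, -⟩ := hL.exists_line_notMem a
  have h : Nat.card ℓ = _ := ProjectivePlane.pointCount_eq P (⟨ℓ, hℓ⟩ : {ℓ // ℓ ∈ L})
  rw [Nat.card_eq_finsetCard, hL.card_line ℓ hℓ] at h
  omega

theorem card_lines_through [Finite P] (hL : IsProjectivePlane q L) (p : P) :
    #{ℓ : {ℓ // ℓ ∈ L} | p ∈ ℓ.1} = q + 1 := by
  let := hL.toProjectivePlane
  rw [← Fintype.card_subtype, ← Nat.card_eq_fintype_card, ← hL.order_eq]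
  exact ProjectivePlane.lineCount_eq {ℓ // ℓ ∈ L} p

theorem card_lines [Finite P] (hL : IsProjectivePlane q L) :
    Fintype.card {ℓ // ℓ ∈ L} = q ^ 2 + q + 1 := by
  let := hL.toProjectivePlane
  rw [← hL.order_eq]
  exact ProjectivePlane.card_lines P {ℓ // ℓ ∈ L}

theorem card_inter (hL : IsProjectivePlane q L) {ℓ m : Finset P} (hℓ : ℓ ∈ L) (hm : m ∈ L) :
    #(ℓ ∩ m) = if ℓ = m then q + 1 else 1 := by
  split_ifs with h
  · rw [← h, inter_self, hL.card_line ℓ hℓ]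
  · obtain ⟨p, hp, hunique⟩ := hL.exists_unique_point ℓ hℓ m hm h
    exact card_eq_one.mpr ⟨p, eq_singleton_iff_unique_mem.mpr ⟨mem_inter.mpr hp,
      fun r hr => hunique r (mem_inter.mp hr)⟩⟩

theorem sum_sum_incident {M : Type*} [AddCommMonoid M] (hL : IsProjectivePlane q L)
    (x : {ℓ // ℓ ∈ L} → M) (ℓ : {ℓ // ℓ ∈ L}) :
    ∑ p ∈ ℓ.1, ∑ m, (if p ∈ m.1 then x m else 0) = ∑ m, x m + q • x ℓ := by
  calc ∑ p ∈ ℓ.1, ∑ m, (if p ∈ m.1 then x m else 0)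
      = ∑ m, #(ℓ.1 ∩ m.1) • x m := by
        rw [sum_comm]
        simp only [sum_ite_mem, sum_const]
    _ = ∑ m, (x m + if m = ℓ then q • x m else 0) := by
        refine sum_congr rfl fun m _ => ?_
        rw [hL.card_inter ℓ.2 m.2]
        by_cases h : m = ℓ
        · simp [h, add_smul, add_comm]
        · simp [h, Ne.symm (Subtype.coe_injective.ne h)]
    _ = ∑ m, x m + q • x ℓ := by rw [sum_add_distrib, sum_ite_eq']; simp

end IsProjectivePlane

theorem statement_1_general (q : ℕ) (hodd : Odd q) (P : Type) [Fintype P] [DecidableEq P]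
    (L : Finset (Finset P)) (hL : IsProjectivePlane q L) :
    {x : {ℓ // ℓ ∈ L} → ZMod 2 |
        ∀ p : P, (∑ ℓ : {ℓ // ℓ ∈ L}, if p ∈ ℓ.1 then x ℓ else 0) = 0} =
      {0, fun _ => 1} ∧
    hammingNorm (fun _ : {ℓ // ℓ ∈ L} => (1 : ZMod 2)) = q ^ 2 + q + 1 := by
  refine ⟨Set.Subset.antisymm (fun x hx => ?_) ?_, ?_⟩
  · have hconst : ∀ ℓ, x ℓ = ∑ m, x m := fun ℓ => by
      have h := hL.sum_sum_incident x ℓ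
      rw [sum_eq_zero fun p _ => hx p, nsmul_eq_mul, hodd.natCast_zmod_two, one_mul] at h
      exact (CharTwo.add_eq_zero.mp h.symm).symm
    obtain h | h : ∑ m, x m = 0 ∨ ∑ m, x m = 1 := by generalize ∑ m, x m = c; decide +revert
    · exact Or.inl (funext fun ℓ => (hconst ℓ).trans h)
    · exact Or.inr (funext fun ℓ => (hconst ℓ).trans h)
  · rintro x (rfl | rfl) p
    · simp
    · rw [sum_boole, hL.card_lines_through, ZMod.natCast_eq_zero_iff_even]
      exact hodd.add_one
  · simpa [hammingNorm] using hL.card_lines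

/-- For a finite projective plane of odd order `q ≥ 2`, the right kernel over
`F₂` of the point-line incidence matrix consists exactly of the zero vector and the
all-ones vector; the unique nonzero element has Hamming weight `q² + q + 1` (which is the
number of lines), so the kernel is a 1-dimensional `F₂`-subspace. -/
theorem statement_1 (q : ℕ) (hq : 2 ≤ q) (hodd : Odd q) (P : Type) [Fintype P] [DecidableEq P]
    (L : Finset (Finset P)) (hL : IsProjectivePlane q L) :
    {x : {ℓ // ℓ ∈ L} → ZMod 2 |
        ∀ p : P, (∑ ℓ : {ℓ // ℓ ∈ L}, if p ∈ ℓ.1 then x ℓ else 0) = 0} =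
      {0, fun _ => 1} ∧
    hammingNorm (fun _ : {ℓ // ℓ ∈ L} => (1 : ZMod 2)) = q ^ 2 + q + 1 :=
  statement_1_general q hodd P L hL
end

section
/- Let h ≥ 1, q = 2^h, and let F be the finite field with q elements. Let P be the set of 1-dimensional subspaces and L the set of 2-dimensional subspaces of the vector space F³, with a point incident to a line when the 1-dimensional subspace is contained in the 2-dimensional one. Then the F₂-vector space of vectors x : L → F₂ satisfying, for every point p ∈ P, Σ_{ℓ ∈ L, p ⊆ ℓ} x(ℓ) = 0 in F₂, has dimension 2^{2h} − 3^h + 2^h; equivalently, the F₂-rank of the point-line incidence matrix of PG(2,2^h) is 3^h + 1. -/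
/-!
Identify the line `ℓ` with the point `b` such that `ℓ = b^⊥` for the dot product. For points
`a = ⟨v⟩` and `b = ⟨w⟩` of `PG(2, q)`, `q = 2^h`, the incidence entry is
`1 - (v ⬝ w)^(q-1) = 1 + (v ⬝ w)^(q-1)` in `F`, and since `q - 1 = ∑_{t<h} 2^t` and Frobenius
is additive, `(v ⬝ w)^(q-1) = ∑_f μ_f(v) μ_f(w)`, the sum running over the `3^h` maps
`f : Fin h → Fin 3`, where `μ_f(v) = ∏_t v_{f t}^(2^t)`. So over `F` the incidence matrix is
`U Uᵀ`, where the `3^h + 1` columns of `U` are the constant `1` and the `μ_f`. These columns are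
independent: the `μ_f` are distinct monomials of degree `< q` in each variable, and summing over
all of `F³` separates the constant from them, since every `∑_v μ_f(v)` vanishes. So the rank
is `3^h + 1` over `F`, hence over `F₂` as well, and rank-nullity gives the kernel dimension.
-/

open Finset Module Matrix MvPolynomial Projectivization
open LinearMap (BilinForm)
open scoped LinearAlgebra.Projectivization

universe u

namespace Matrix

variable {m n K L : Type*} [Field K] [Field L] [Fintype n]

theorem rank_fromBlocks_one_zero (r s : ℕ) :
    (fromBlocks (1 : Matrix (Fin r) (Fin r) K) 0 0 (0 : Matrix (Fin s) (Fin s) K)).rank = r := by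
  classical
  rw [← diagonal_one, ← diagonal_zero, fromBlocks_diagonal, rank_diagonal]
  simp [Fintype.card_subtype, Finset.card_filter, Fintype.sum_sum_type]

theorem rank_map_ringHom [DecidableEq n] (f : K →+* L) (A : Matrix n n K) :
    (A.map f).rank = A.rank := by
  obtain ⟨V, U, e, hV, hU, hVAU⟩ := A.exists_rank_normal_form
  have hnormal : V.map f * A.map f * U.map f =
      (fromBlocks (1 : Matrix (Fin A.rank) (Fin A.rank) L) 0 0 0).submatrix e e := by
    rw [← Matrix.map_mul, ← Matrix.map_mul, hVAU, ← submatrix_map, fromBlocks_map,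
      Matrix.map_one _ f.map_zero f.map_one, Matrix.map_zero _ f.map_zero,
      Matrix.map_zero _ f.map_zero, Matrix.map_zero _ f.map_zero]
  have hunit {W : Matrix n n K} (hW : IsUnit W) : IsUnit (W.map f).det :=
    (isUnit_iff_isUnit_det _).mp (hW.map f.mapMatrix)
  rw [← rank_mul_eq_right_of_isUnit_det _ _ (hunit hV),
    ← rank_mul_eq_left_of_isUnit_det _ _ (hunit hU), hnormal, rank_submatrix,
    rank_fromBlocks_one_zero]

theorem rank_mul_transpose_of_mulVec_injective [Fintype m] {U : Matrix m n K}
    (hU : Function.Injective U.mulVec) : (U * Uᵀ).rank = Fintype.card n := by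
  have hrank : U.rank = Fintype.card n := by
    rw [rank, LinearMap.finrank_range_of_inj hU, finrank_fintype_fun_eq_card]
  have htop : LinearMap.range Uᵀ.mulVecLin = ⊤ := Submodule.eq_top_of_finrank_eq <| by
    rw [← rank, rank_transpose, hrank, finrank_fintype_fun_eq_card]
  rw [rank, mulVecLin_mul, LinearMap.range_comp_of_range_eq_top _ htop, ← rank, hrank]

theorem dotProductBilin_nondegenerate [Fintype m] :
    (dotProductBilin K K : BilinForm K (m → K)).Nondegenerate :=
  ⟨fun _ hv => dotProduct_eq_zero_iff.mp hv,
    fun _ hw => dotProduct_eq_zero_iff.mp fun v => by rw [dotProduct_comm]; exact hw v⟩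

theorem dotProductBilin_isRefl [Fintype m] :
    BilinForm.IsRefl (dotProductBilin K K : BilinForm K (m → K)) :=
  fun v w hvw => by simpa [dotProduct_comm] using hvw

end Matrix

namespace LinearMap.BilinForm

variable {K V : Type*} [Field K] [AddCommGroup V] [Module K V] [FiniteDimensional K V]
  {B : BilinForm K V}

def orthogonalEquivOfFinrank (hB : B.Nondegenerate) (hB₀ : B.IsRefl) {k l : ℕ}
    (hkl : k + l = finrank K V) :
    {W : Submodule K V // finrank K W = k} ≃ {W : Submodule K V // finrank K W = l} where
  toFun W := ⟨B.orthogonal W, by rw [finrank_orthogonal hB, W.2]; omega⟩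
  invFun W := ⟨B.orthogonal W, by rw [finrank_orthogonal hB, W.2]; omega⟩
  left_inv W := Subtype.ext (orthogonal_orthogonal hB hB₀ W)
  right_inv W := Subtype.ext (orthogonal_orthogonal hB hB₀ W)

end LinearMap.BilinForm

namespace Projectivization

variable {m K : Type*} [Fintype m] [Field K]

theorem orthogonal_iff_dotProduct_rep {a b : ℙ K (m → K)} :
    orthogonal a b ↔ a.rep ⬝ᵥ b.rep = 0 := by
  conv_lhs => rw [← mk_rep a, ← mk_rep b]
  exact orthogonal_mk _ _

theorem submodule_le_orthogonal_iff {a b : ℙ K (m → K)} :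
    a.submodule ≤ BilinForm.orthogonal (dotProductBilin K K) b.submodule ↔ orthogonal a b := by
  rw [submodule_eq a, submodule_eq b, Submodule.span_singleton_le_iff_mem,
    BilinForm.orthogonal_span_singleton_eq_toLin_ker, LinearMap.mem_ker,
    orthogonal_comm, orthogonal_iff_dotProduct_rep]
  rfl

end Projectivization

theorem Projectivization.card_of_finrank_three {K V : Type*} [Field K] [AddCommGroup V]
    [Module K V] [Finite K] (h : finrank K V = 3) :
    Nat.card (ℙ K V) = Nat.card K ^ 2 + Nat.card K + 1 := by
  simp only [card_of_finrank K V h, sum_range_succ, range_one, sum_singleton, pow_zero, pow_one]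
  ring

theorem MvPolynomial.linearIndependent_eval_monomial {σ K : Type u} {ι : Type*} [Field K]
    [Fintype K] [Finite σ] {d : ι → σ →₀ ℕ} (hd : Function.Injective d)
    (hle : ∀ i s, d i s ≤ Fintype.card K - 1) :
    LinearIndependent K (fun i (v : σ → K) => eval v (monomial (d i) 1)) := by
  have hmono : LinearIndependent K (fun i => (monomial (d i) 1 : MvPolynomial σ K)) :=
    (basisMonomials σ K).linearIndependent.comp d hd
  refine hmono.map (f := evalₗ K σ) (Submodule.disjoint_def.mpr fun p hp hker => ?_)
  refine eq_zero_of_eval_eq_zero σ K p (fun v => congrFun hker v) ?_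
  refine Submodule.span_le.mpr ?_ hp
  rintro - ⟨i, rfl⟩
  rw [SetLike.mem_coe, mem_restrictDegree]
  intro s hs j
  rw [Finset.mem_singleton.mp (support_monomial_subset hs)]
  exact hle i j

namespace FiniteField

variable {F : Type*} [Field F] [Fintype F]

theorem one_sub_pow_card_sub_one_eq_ite [DecidableEq F] (x : F) :
    1 - x ^ (Fintype.card F - 1) = if x = 0 then 1 else 0 := by
  split_ifs with hx
  · rw [hx, zero_pow (by have := Fintype.one_lt_card (α := F); omega), sub_zero]
  · rw [pow_card_sub_one_eq_one x hx, sub_self]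

theorem charP_two_of_card_eq_two_pow {h : ℕ} (hF : Fintype.card F = 2 ^ h) (hh : h ≠ 0) :
    CharP F 2 :=
  ringChar.of_eq <| even_card_iff_char_two.mpr <| by
    rw [hF, Nat.two_pow_mod_two_eq_zero]; exact Nat.pos_of_ne_zero hh

end FiniteField

variable {m : Type*} {h : ℕ}

theorem Fin.sum_two_pow (h : ℕ) : ∑ t : Fin h, 2 ^ (t : ℕ) = 2 ^ h - 1 := by
  rw [Fin.sum_univ_eq_sum_range (fun t => 2 ^ t), Nat.geomSum_eq le_rfl]
  simp

noncomputable def binaryExponent (f : Fin h → m) : m →₀ ℕ :=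
  ∑ t, Finsupp.single (f t) (2 ^ (t : ℕ))

theorem binaryExponent_apply [DecidableEq m] (f : Fin h → m) (s : m) :
    binaryExponent f s = ∑ t with f t = s, 2 ^ (t : ℕ) := by
  simp [binaryExponent, Finsupp.finsetSum_apply, Finsupp.single_apply, Finset.sum_filter]

theorem binaryExponent_injective :
    Function.Injective (binaryExponent : (Fin h → m) → m →₀ ℕ) := by
  classical
  intro f g hfg
  have hfibre (s : m) : univ.filter (f · = s) = univ.filter (g · = s) := by
    apply Finset.map_injective Fin.valEmbedding
    apply Finset.geomSum_injective le_rfl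
    simpa [Finset.sum_map, binaryExponent_apply] using DFunLike.congr_fun hfg s
  funext t
  simpa [eq_comm] using Finset.ext_iff.mp (hfibre (f t)) t

theorem binaryExponent_le [DecidableEq m] (f : Fin h → m) (s : m) :
    binaryExponent f s ≤ 2 ^ h - 1 := by
  rw [binaryExponent_apply, ← Fin.sum_two_pow]
  exact Finset.sum_le_sum_of_subset (Finset.filter_subset _ _)

theorem exists_binaryExponent_lt [Nontrivial m] (hh : h ≠ 0) (f : Fin h → m) :
    ∃ s, binaryExponent f s < 2 ^ h - 1 := by
  classical
  let t₀ : Fin h := ⟨0, Nat.pos_of_ne_zero hh⟩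
  obtain ⟨s, hs⟩ := exists_ne (f t₀)
  have hsub : univ.filter (f · = s) ⊆ univ.erase t₀ := fun t ht =>
    mem_erase.mpr ⟨by rintro rfl; exact hs (mem_filter.mp ht).2.symm, mem_univ t⟩
  refine ⟨s, ?_⟩
  calc binaryExponent f s ≤ ∑ t ∈ univ.erase t₀, 2 ^ (t : ℕ) := by
        rw [binaryExponent_apply]; exact sum_le_sum_of_subset hsub
    _ < ∑ t : Fin h, 2 ^ (t : ℕ) := sum_erase_lt_of_pos (mem_univ t₀) (by positivity)
    _ = 2 ^ h - 1 := Fin.sum_two_pow h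

section CommSemiring

variable {R : Type*} [CommSemiring R]

def binaryMonomial (f : Fin h → m) (v : m → R) : R := ∏ t, v (f t) ^ 2 ^ (t : ℕ)

theorem binaryMonomial_eq_prod_pow [Fintype m] (f : Fin h → m) (v : m → R) :
    binaryMonomial f v = ∏ s, v s ^ binaryExponent f s := by
  classical
  simp only [binaryMonomial, binaryExponent_apply, ← Finset.prod_pow_eq_pow_sum]
  rw [← Finset.prod_fiberwise univ f]
  exact prod_congr rfl fun s _ => prod_congr rfl fun t ht => by rw [(mem_filter.mp ht).2]

theorem eval_monomial_binaryExponent [Fintype m] (f : Fin h → m) (v : m → R) :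
    eval v (monomial (binaryExponent f) 1) = binaryMonomial f v := by
  rw [eval_monomial, one_mul, Finsupp.prod_fintype _ _ (fun _ => pow_zero _),
    binaryMonomial_eq_prod_pow]

theorem binaryMonomial_smul (f : Fin h → m) (c : R) (v : m → R) :
    binaryMonomial f (c • v) = c ^ (2 ^ h - 1) * binaryMonomial f v := by
  simp only [binaryMonomial, Pi.smul_apply, smul_eq_mul, mul_pow, prod_mul_distrib,
    prod_pow_eq_pow_sum, Fin.sum_two_pow]

theorem binaryMonomial_zero (hh : h ≠ 0) (f : Fin h → m) : binaryMonomial f (0 : m → R) = 0 :=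
  prod_eq_zero (mem_univ ⟨0, Nat.pos_of_ne_zero hh⟩) (by simp)

theorem dotProduct_pow_eq_sum_binaryMonomial [Fintype m] [ExpChar R 2] (w v : m → R) :
    (w ⬝ᵥ v) ^ (2 ^ h - 1) = ∑ f : Fin h → m, binaryMonomial f w * binaryMonomial f v := by
  have hfrob (t : ℕ) : (w ⬝ᵥ v) ^ 2 ^ t = ∑ s, (w s * v s) ^ 2 ^ t :=
    map_sum (iterateFrobenius R 2 t) _ _
  rw [← Fin.sum_two_pow, ← prod_pow_eq_pow_sum]
  simp only [hfrob, prod_univ_sum, Fintype.piFinset_univ, binaryMonomial, ← prod_mul_distrib,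
    mul_pow]

end CommSemiring

section FiniteField

variable {F : Type*} [Field F] [Fintype F] (hF : Fintype.card F = 2 ^ h)
include hF

theorem binaryMonomial_smul_of_ne_zero (f : Fin h → m) {c : F} (hc : c ≠ 0) (v : m → F) :
    binaryMonomial f (c • v) = binaryMonomial f v := by
  rw [binaryMonomial_smul, ← hF, FiniteField.pow_card_sub_one_eq_one c hc, one_mul]

theorem sum_binaryMonomial [Fintype m] [DecidableEq m] [Nontrivial m] (hh : h ≠ 0)
    (f : Fin h → m) :
    ∑ v : m → F, binaryMonomial f v = 0 := by
  obtain ⟨s, hs⟩ := exists_binaryExponent_lt hh f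
  simp only [binaryMonomial_eq_prod_pow]
  rw [← Fintype.prod_sum (fun s x => x ^ binaryExponent f s)]
  exact prod_eq_zero (mem_univ s) (FiniteField.sum_pow_lt_card_sub_one F _ (hF ▸ hs))

end FiniteField

theorem linearIndependent_binaryMonomial {m F : Type u} [Finite m] [Field F] [Fintype F]
    (hF : Fintype.card F = 2 ^ h) :
    LinearIndependent F (fun f : Fin h → m => (binaryMonomial f : (m → F) → F)) := by
  classical
  have := Fintype.ofFinite m
  simpa only [eval_monomial_binaryExponent] using
    linearIndependent_eval_monomial binaryExponent_injective
      fun (f : Fin h → m) s => hF ▸ binaryExponent_le f s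

section PointHyperplane

variable (F m : Type u) [Field F] [Fintype F] [Fintype m] (h : ℕ)

/-- Any representative `a.rep` will do: over a field with `2 ^ h` elements each `binaryMonomial f`
is invariant under nonzero scalars (`binaryMonomial_smul_of_ne_zero`). -/
noncomputable def binaryMonomialMatrix : Matrix (ℙ F (m → F)) (Option (Fin h → m)) F :=
  of fun a o => o.elim 1 fun f => binaryMonomial f a.rep

open scoped Classical in
noncomputable def orthogonalityMatrix (R : Type*) [Zero R] [One R] :
    Matrix (ℙ F (m → F)) (ℙ F (m → F)) R :=
  of fun a b => if orthogonal a b then 1 else 0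

variable {F m h}

theorem mulVec_injective_binaryMonomialMatrix [DecidableEq m] [Nontrivial m]
    [Fintype (ℙ F (m → F))] (hF : Fintype.card F = 2 ^ h) (hh : h ≠ 0) :
    Function.Injective (binaryMonomialMatrix F m h).mulVec := by
  have := FiniteField.charP_two_of_card_eq_two_pow hF hh
  rw [← coe_mulVecLin, injective_iff_map_eq_zero]
  intro g hg
  let G (v : m → F) : F := g none + ∑ f, binaryMonomial f v * g (some f)
  have hG (v : m → F) (hv : v ≠ 0) : G v = 0 := by
    obtain ⟨c, hc⟩ := exists_smul_eq_mk_rep F v hv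
    have := congrFun hg (mk F v hv)
    simpa [mulVec, dotProduct, Fintype.sum_option, binaryMonomialMatrix, ← hc, Units.smul_def,
      binaryMonomial_smul_of_ne_zero hF _ c.ne_zero] using this
  have hsum : ∑ v, G v = 0 := by
    simp only [G, sum_add_distrib, sum_const, card_univ, Fintype.card_fun]
    rw [Finset.sum_comm]
    simp [← sum_mul, sum_binaryMonomial hF hh]
  have hnone : g none = 0 := by
    simpa [G, binaryMonomial_zero hh] using (Fintype.sum_eq_single 0 hG).symm.trans hsum
  have hsome : ∀ f, g (some f) = 0 := by
    have hli := linearIndependent_binaryMonomial (m := m) hF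
    refine Fintype.linearIndependent_iff.mp hli (fun f => g (some f)) (funext fun v => ?_)
    rw [Finset.sum_apply]
    by_cases hv : v = 0
    · simp [hv, binaryMonomial_zero hh]
    · simpa [G, hnone, mul_comm] using hG v hv
  funext o
  cases o with
  | none => exact hnone
  | some f => exact hsome f

theorem orthogonalityMatrix_eq_mul_transpose [CharP F 2] (hF : Fintype.card F = 2 ^ h) :
    orthogonalityMatrix F m F = binaryMonomialMatrix F m h * (binaryMonomialMatrix F m h)ᵀ := by
  classical
  ext a b
  simp only [orthogonalityMatrix, binaryMonomialMatrix, of_apply, mul_apply, transpose_apply,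
    Fintype.sum_option, Option.elim_none, Option.elim_some, mul_one]
  rw [← dotProduct_pow_eq_sum_binaryMonomial, ← hF, ← CharTwo.sub_eq_add,
    FiniteField.one_sub_pow_card_sub_one_eq_ite, orthogonal_iff_dotProduct_rep]

theorem rank_orthogonalityMatrix [Nontrivial m] [Fintype (ℙ F (m → F))]
    (hF : Fintype.card F = 2 ^ h) (hh : h ≠ 0) :
    (orthogonalityMatrix F m (ZMod 2)).rank = Fintype.card m ^ h + 1 := by
  classical
  have := FiniteField.charP_two_of_card_eq_two_pow hF hh
  have hmap : (orthogonalityMatrix F m (ZMod 2)).map (ZMod.castHom (dvd_refl 2) F) =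
      orthogonalityMatrix F m F := by
    ext a b
    simp [orthogonalityMatrix, apply_ite]
  rw [← rank_map_ringHom (ZMod.castHom (dvd_refl 2) F), hmap,
    orthogonalityMatrix_eq_mul_transpose hF,
    rank_mul_transpose_of_mulVec_injective (mulVec_injective_binaryMonomialMatrix hF hh),
    Fintype.card_option, Fintype.card_fun, Fintype.card_fin]

end PointHyperplane

/-- For `q = 2^h` (`h ≥ 1`) and `F` the field with `q` elements, the `F₂`-space
of vectors indexed by the lines of `PG(2,q)` (the 2-dimensional subspaces of `F³`) whose
incidence sums at every point (1-dimensional subspace) vanish has dimension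
`2^(2h) - 3^h + 2^h`; equivalently, the `F₂`-rank of the point-line incidence matrix of
`PG(2, 2^h)` equals `3^h + 1`. -/
theorem statement_2 (h : ℕ) (hh : 1 ≤ h) (F : Type) [Field F] [Fintype F]
    (hF : Fintype.card F = 2 ^ h) :
    letI : ∀ a b : Submodule F (Fin 3 → F), Decidable (a ≤ b) :=
      fun _ _ => Classical.propDecidable _
    letI : Fintype (Submodule F (Fin 3 → F)) := Fintype.ofFinite _
    let M : Matrix {W : Submodule F (Fin 3 → F) // Module.finrank F W = 1}
        {W : Submodule F (Fin 3 → F) // Module.finrank F W = 2} (ZMod 2) :=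
      Matrix.of fun p ℓ => if p.1 ≤ ℓ.1 then 1 else 0
    Module.finrank (ZMod 2) ↥(LinearMap.ker M.mulVecLin) = 2 ^ (2 * h) - 3 ^ h + 2 ^ h ∧
    M.rank = 3 ^ h + 1 := by
  intro M
  -- the statement's instance, so that `M.rank` below elaborates as in the statement
  let : Fintype (Submodule F (Fin 3 → F)) := Fintype.ofFinite _
  let : Fintype (ℙ F (Fin 3 → F)) := Fintype.ofFinite _
  let point := equivSubmodule F (Fin 3 → F)
  let line := point.trans (BilinForm.orthogonalEquivOfFinrank dotProductBilin_nondegenerate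
    dotProductBilin_isRefl (by simp : 1 + 2 = finrank F (Fin 3 → F)))
  have hM : M.submatrix point line = orthogonalityMatrix F (Fin 3) (ZMod 2) := by
    ext a b
    simp only [M, point, line, orthogonalityMatrix, BilinForm.orthogonalEquivOfFinrank,
      equivSubmodule, submatrix_apply, of_apply, Equiv.coe_trans, Equiv.coe_fn_mk,
      Function.comp_apply, Equiv.ofInjective_apply]
    classical exact if_congr submodule_le_orthogonal_iff rfl rfl
  have hrank : M.rank = 3 ^ h + 1 := by
    rw [← rank_submatrix M point line, hM, rank_orthogonalityMatrix hF (by omega), Fintype.card_fin]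
  have hlines : Fintype.card {W : Submodule F (Fin 3 → F) // finrank F W = 2} =
      2 ^ (2 * h) + 2 ^ h + 1 := by
    rw [← Fintype.card_congr line, Fintype.card_eq_nat_card, card_of_finrank_three (by simp),
      Nat.card_eq_fintype_card, hF, ← pow_mul, mul_comm]
  have hle : 3 ^ h ≤ 2 ^ (2 * h) := by
    rw [pow_mul]; exact Nat.pow_le_pow_left (by norm_num) h
  refine ⟨?_, hrank⟩
  have hnullity := LinearMap.finrank_range_add_finrank_ker M.mulVecLin
  rw [← rank, hrank, finrank_fintype_fun_eq_card, hlines] at hnullity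
  omega
end

section
/- Let h ≥ 1, q = 2^h, and let F be the finite field with q elements. Let P be the set of 1-dimensional subspaces and L the set of 2-dimensional subspaces of F³, with incidence given by inclusion. Consider the set of nonzero vectors x : L → F₂ satisfying, for every point p ∈ P, Σ_{ℓ ∈ L, p ⊆ ℓ} x(ℓ) = 0 in F₂. Every such nonzero vector has Hamming weight at least 2^h + 2, and there exists one of Hamming weight exactly 2^h + 2. -/
/-!
Lower bound: if `x ℓ₀ ≠ 0`, the vanishing incidence sum at each of the `q + 1` points of `ℓ₀`
produces a further line of the support through that point, and these lines are pairwise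
distinct because two distinct points lie on only one common line.

Sharpness: in characteristic 2 the conic `y² = x z` and its nucleus form a hyperoval, a set of
`q + 2` points met by every line in an even number of points. Read as dual coordinates, they give
`q + 2` lines with an even number through each point: for the point `w` the count reduces to
the roots of `w₀ + t w₁ + t² w₂`, which are paired by `t ↦ t + w₁ / w₂` when `w₁ w₂ ≠ 0`.
-/

open Finset Module
open scoped LinearAlgebra.Projectivization

theorem Fintype.exists_ne_ne_zero_of_sum_eq_zero {ι M : Type*} [Fintype ι] [AddCommMonoid M]
    {f : ι → M} (hf : ∑ i, f i = 0) {i₀ : ι} (hi₀ : f i₀ ≠ 0) : ∃ i ≠ i₀, f i ≠ 0 := by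
  classical
  rw [← add_sum_erase _ _ (mem_univ i₀)] at hf
  have hrest : ∑ i ∈ univ.erase i₀, f i ≠ 0 := fun h => hi₀ (by simpa [h] using hf)
  obtain ⟨i, hi, hfi⟩ := exists_ne_zero_of_sum_ne_zero hrest
  exact ⟨i, ne_of_mem_erase hi, hfi⟩

theorem card_add_one_le_hammingNorm {P L ι M : Type*} [Fintype L] [AddCommMonoid M]
    [DecidableEq M] (I : P → L → Prop) [∀ p ℓ, Decidable (I p ℓ)] {x : L → M}
    (hx : ∀ p, ∑ ℓ, (if I p ℓ then x ℓ else 0) = 0) {ℓ₀ : L} (hℓ₀ : x ℓ₀ ≠ 0)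
    (g : ι → P) (hg : ∀ i, I (g i) ℓ₀)
    (hunique : ∀ i j m, i ≠ j → I (g i) m → I (g j) m → m = ℓ₀) :
    Nat.card ι + 1 ≤ hammingNorm x := by
  classical
  have hnext : ∀ i, ∃ m ≠ ℓ₀, I (g i) m ∧ x m ≠ 0 := fun i => by
    simpa [ite_ne_right_iff] using
      Fintype.exists_ne_ne_zero_of_sum_eq_zero (hx (g i)) (by simpa [hg i] using hℓ₀)
  choose m hm_ne hm_inc hm_supp using hnext
  have hm_inj : Function.Injective m := fun i j hij => by
    by_contra hne
    exact hm_ne i (hunique i j _ hne (hm_inc i) (hij ▸ hm_inc j))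
  have := Finite.of_injective m hm_inj
  have := Fintype.ofFinite ι
  calc Nat.card ι + 1 = #(insert ℓ₀ (univ.image m)) := by
        rw [card_insert_of_notMem (by simpa using hm_ne),
          card_image_of_injective _ hm_inj, card_univ, Nat.card_eq_fintype_card]
    _ ≤ hammingNorm x := by
        refine card_le_card fun ℓ hℓ => ?_
        rcases mem_insert.1 hℓ with rfl | hℓ
        · simpa using hℓ₀
        · obtain ⟨i, -, rfl⟩ := mem_image.1 hℓ
          simpa using hm_supp i

theorem card_add_two_le_hammingNorm {F V M : Type*} [Field F] [Fintype F] [AddCommGroup V]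
    [Module F V] [AddCommMonoid M] [DecidableEq M]
    [Fintype {W : Submodule F V // finrank F W = 2}] [∀ a b : Submodule F V, Decidable (a ≤ b)]
    {x : {W : Submodule F V // finrank F W = 2} → M} (hx0 : x ≠ 0)
    (hx : ∀ p : {W : Submodule F V // finrank F W = 1},
      ∑ ℓ : {W : Submodule F V // finrank F W = 2}, (if p.1 ≤ ℓ.1 then x ℓ else 0) = 0) :
    Fintype.card F + 2 ≤ hammingNorm x := by
  obtain ⟨ℓ₀, hℓ₀⟩ := Function.ne_iff.1 hx0
  have hpoints : Nat.card (ℙ F ℓ₀.1) = Fintype.card F + 1 := by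
    rw [Projectivization.card_of_finrank_two F _ ℓ₀.2, Nat.card_eq_fintype_card]
  let g := Projectivization.map ℓ₀.1.subtype ℓ₀.1.subtype_injective
  have hg : ∀ y, g y ∈ ℓ₀.1.projectivization := fun y => by
    induction y using Projectivization.ind with | h v hv => exact v.2
  have := card_add_one_le_hammingNorm (fun (y : ℙ F V) ℓ => y.submodule ≤ ℓ.1)
    (fun y => hx ⟨y.submodule, y.finrank_submodule⟩) hℓ₀ g
    (fun y => (Submodule.mem_projectivization_iff_submodule_le _ _).1 (hg y))
    (fun y z m hyz hym hzm => Subtype.ext <| Projectivization.line_unique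
      ((Projectivization.map_injective _ _).ne hyz) _ _ m.2 ℓ₀.2
      ((Submodule.mem_projectivization_iff_submodule_le _ _).2 hym)
      ((Submodule.mem_projectivization_iff_submodule_le _ _).2 hzm) (hg y) (hg z))
  rwa [hpoints] at this

theorem hammingNorm_ite_mem_range {ι L M : Type*} [Fintype ι] [Fintype L] [Zero M] [One M]
    [NeZero (1 : M)] [DecidableEq M] {e : ι → L} (he : Function.Injective e)
    [DecidablePred (· ∈ Set.range e)] :
    hammingNorm (fun ℓ => if ℓ ∈ Set.range e then (1 : M) else 0) = Fintype.card ι := by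
  classical
  rw [hammingNorm, ← card_univ, ← card_image_of_injective _ he]
  congr 1
  ext ℓ
  simp

section Quadratic

variable {F : Type*} [Field F] [Fintype F] [DecidableEq F] [CharP F 2]

theorem sum_quadratic_roots_zmod_two {a b c : F} (habc : ¬(a = 0 ∧ b = 0 ∧ c = 0)) :
    (∑ t : F, if a + t * b + t ^ 2 * c = 0 then (1 : ZMod 2) else 0) =
      (if b = 0 then 1 else 0) + (if c = 0 then 1 else 0) := by
  by_cases hb : b = 0 <;> by_cases hc : c = 0
  · have ha : a ≠ 0 := fun ha => habc ⟨ha, hb, hc⟩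
    simp [ha, hb, hc]
    decide
  · obtain ⟨r, hr⟩ := FiniteField.isSquare_of_char_two (ringChar.eq F 2) (a / c)
    have hroot : ∀ t : F, a + t * b + t ^ 2 * c = 0 ↔ t = r := fun t => by
      rw [hb, mul_zero, add_zero, CharTwo.add_eq_zero, ← div_eq_iff hc, eq_comm, hr, ← sq,
        CharTwo.sq_inj]
    simp_rw [hroot, Fintype.sum_ite_eq', hb, hc]
    decide
  · have hroot : ∀ t : F, a + t * b + t ^ 2 * c = 0 ↔ t = a / b := fun t => by
      rw [hc, mul_zero, add_zero, CharTwo.add_eq_zero, eq_div_iff hb, eq_comm]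
    simp_rw [hroot, Fintype.sum_ite_eq', hb, hc]
    decide
  · have hshift : ∀ t : F, a + (t + b / c) * b + (t + b / c) ^ 2 * c = a + t * b + t ^ 2 * c :=
      fun t => by
        have hδ : b / c * c = b := div_mul_cancel₀ b hc
        have h2 : (2 : F) = 0 := CharTwo.two_eq_zero
        linear_combination (b / c) * hδ + (b / c * b + t * (b / c) * c) * h2
    rw [if_neg hb, if_neg hc, add_zero]
    refine sum_ninvolution (· + b / c) (fun t => ?_) (fun t _ => ?_) (fun _ => mem_univ _)
      (fun t => CharTwo.add_cancel_right t _)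
    · rw [hshift]
      exact CharTwo.add_self_eq_zero _
    · simpa using div_ne_zero hb hc

end Quadratic

theorem Module.Dual.exists_smul_eq_of_ker_eq {K V : Type*} [Field K] [AddCommGroup V]
    [Module K V] [FiniteDimensional K V] {f g : Dual K V} (h : LinearMap.ker f = LinearMap.ker g) :
    ∃ c : K, c • f = g := by
  by_cases hf : f = 0
  · refine ⟨0, ?_⟩
    rw [hf, LinearMap.ker_zero, eq_comm, LinearMap.ker_eq_top] at h
    rw [zero_smul, h]
  obtain ⟨v, hv⟩ : ∃ v, f v ≠ 0 := by simpa [LinearMap.ext_iff] using hf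
  have hgv : g v ≠ 0 := fun hgv => hv (LinearMap.mem_ker.1 (h ▸ LinearMap.mem_ker.2 hgv))
  have hc : g v / f v ≠ 0 := div_ne_zero hgv hv
  refine ⟨g v / f v, eq_of_ker_eq_of_apply_eq v ?_ ?_ ?_⟩
  · rw [LinearMap.ker_smul _ _ hc, h]
  · simp [div_mul_cancel₀ _ hv]
  · simpa [div_mul_cancel₀ _ hv] using hgv

section Hyperoval

variable (F : Type*) [Field F]

def hyperoval : Option (Option F) → Fin 3 → F
  | none => ![0, 1, 0]
  | some none => ![0, 0, 1]
  | some (some t) => ![1, t, t ^ 2]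

variable {F}

theorem hyperoval_ne_zero (i : Option (Option F)) : hyperoval F i ≠ 0 := by
  rcases i with _ | _ | t <;> simp [hyperoval, funext_iff, Fin.forall_fin_succ]

theorem eq_of_smul_hyperoval_eq {i j : Option (Option F)} {c : F}
    (h : c • hyperoval F i = hyperoval F j) : i = j := by
  rcases i with _ | _ | t <;> rcases j with _ | _ | s <;>
    simp [hyperoval, funext_iff, Fin.forall_fin_succ] at h ⊢
  all_goals obtain ⟨rfl, h⟩ := h; simp_all

theorem sum_hyperoval_dotProduct_eq_zero [Fintype F] [DecidableEq F] [CharP F 2]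
    {w : Fin 3 → F} (hw : w ≠ 0) :
    (∑ i, if hyperoval F i ⬝ᵥ w = 0 then (1 : ZMod 2) else 0) = 0 := by
  have hw' : ¬(w 0 = 0 ∧ w 1 = 0 ∧ w 2 = 0) := fun h0 =>
    hw (funext fun k => by fin_cases k <;> simp [h0])
  simp only [Fintype.sum_option, hyperoval, dotProduct, Fin.sum_univ_three, Matrix.cons_val_zero,
    Matrix.cons_val_one, Matrix.cons_val_two, Matrix.tail_cons, Matrix.head_cons, zero_mul,
    one_mul, zero_add, add_zero]
  rw [sum_quadratic_roots_zmod_two hw', ← add_assoc]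
  exact CharTwo.add_self_eq_zero _

variable (F) in
def hyperovalLine (i : Option (Option F)) : {W : Submodule F (Fin 3 → F) // finrank F W = 2} :=
  ⟨LinearMap.ker (dotProductEquiv F (Fin 3) (hyperoval F i)), by
    have := (dotProductEquiv F (Fin 3) (hyperoval F i)).finrank_ker_add_one_of_ne_zero
      ((LinearEquiv.map_ne_zero_iff _).2 (hyperoval_ne_zero i))
    simp only [finrank_fin_fun] at this
    omega⟩

theorem hyperovalLine_injective : Function.Injective (hyperovalLine F) := fun i j hij => by
  obtain ⟨c, hc⟩ := Module.Dual.exists_smul_eq_of_ker_eq (congrArg Subtype.val hij)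
  rw [← map_smul, (dotProductEquiv F (Fin 3)).injective.eq_iff] at hc
  exact eq_of_smul_hyperoval_eq hc

theorem mem_hyperovalLine_iff {i : Option (Option F)} {w : Fin 3 → F} :
    w ∈ (hyperovalLine F i).1 ↔ hyperoval F i ⬝ᵥ w = 0 :=
  Iff.rfl

theorem exists_hammingNorm_eq_card_add_two [Fintype F] [CharP F 2]
    [Fintype {W : Submodule F (Fin 3 → F) // finrank F W = 2}]
    [∀ a b : Submodule F (Fin 3 → F), Decidable (a ≤ b)] :
    ∃ x : {W : Submodule F (Fin 3 → F) // finrank F W = 2} → ZMod 2, x ≠ 0 ∧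
      (∀ p : {W : Submodule F (Fin 3 → F) // finrank F W = 1},
        ∑ ℓ : {W : Submodule F (Fin 3 → F) // finrank F W = 2},
          (if p.1 ≤ ℓ.1 then x ℓ else 0) = 0) ∧
      hammingNorm x = Fintype.card F + 2 := by
  classical
  refine ⟨fun ℓ => if ℓ ∈ Set.range (hyperovalLine F) then 1 else 0,
    Function.ne_iff.2 ⟨hyperovalLine F none, by simp⟩, fun p => ?_, ?_⟩
  · obtain ⟨w, hw, hp⟩ : ∃ w ≠ 0, p.1 = Submodule.span F {w} :=
      ⟨_, (Projectivization.mk'' p.1 p.2).rep_nonzero,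
        (Projectivization.submodule_mk'' p.1 p.2).symm.trans (Projectivization.submodule_eq _)⟩
    refine Eq.trans ?_ (sum_hyperoval_dotProduct_eq_zero hw)
    refine (Fintype.sum_of_injective _ hyperovalLine_injective _ _
      (fun ℓ hℓ => ?_) fun i => ?_).symm
    · simp [hℓ]
    · simp [hp, mem_hyperovalLine_iff]
  · rw [hammingNorm_ite_mem_range hyperovalLine_injective]
    simp

end Hyperoval

theorem statement_3_general (h : ℕ) (F : Type) [Field F] [Fintype F]
    (hF : Fintype.card F = 2 ^ h) :
    letI : ∀ a b : Submodule F (Fin 3 → F), Decidable (a ≤ b) :=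
      fun _ _ => Classical.propDecidable _
    letI : Fintype (Submodule F (Fin 3 → F)) := Fintype.ofFinite _
    (∀ x : {W : Submodule F (Fin 3 → F) // Module.finrank F W = 2} → ZMod 2, x ≠ 0 →
      (∀ p : {W : Submodule F (Fin 3 → F) // Module.finrank F W = 1},
        (∑ ℓ : {W : Submodule F (Fin 3 → F) // Module.finrank F W = 2},
          if p.1 ≤ ℓ.1 then x ℓ else 0) = 0) →
      2 ^ h + 2 ≤ hammingNorm x) ∧
    (∃ x : {W : Submodule F (Fin 3 → F) // Module.finrank F W = 2} → ZMod 2, x ≠ 0 ∧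
      (∀ p : {W : Submodule F (Fin 3 → F) // Module.finrank F W = 1},
        (∑ ℓ : {W : Submodule F (Fin 3 → F) // Module.finrank F W = 2},
          if p.1 ≤ ℓ.1 then x ℓ else 0) = 0) ∧
      hammingNorm x = 2 ^ h + 2) := by
  let : ∀ a b : Submodule F (Fin 3 → F), Decidable (a ≤ b) :=
    fun _ _ => Classical.propDecidable _
  let : Fintype (Submodule F (Fin 3 → F)) := Fintype.ofFinite _
  have : CharP F 2 := charP_of_card_eq_prime_pow hF
  rw [← hF]
  exact ⟨fun _ hx0 hx => card_add_two_le_hammingNorm hx0 hx,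
    exists_hammingNorm_eq_card_add_two⟩

/-- For `q = 2^h` (`h ≥ 1`) and `F` the field with `q` elements, every nonzero
vector indexed by the lines of `PG(2,q)` (the 2-dimensional subspaces of `F³`) whose
incidence sums at every point (1-dimensional subspace) vanish over `F₂` has Hamming weight
at least `2^h + 2`, and some such vector has Hamming weight exactly `2^h + 2`. -/
theorem statement_3 (h : ℕ) (hh : 1 ≤ h) (F : Type) [Field F] [Fintype F]
    (hF : Fintype.card F = 2 ^ h) :
    letI : ∀ a b : Submodule F (Fin 3 → F), Decidable (a ≤ b) :=
      fun _ _ => Classical.propDecidable _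
    letI : Fintype (Submodule F (Fin 3 → F)) := Fintype.ofFinite _
    (∀ x : {W : Submodule F (Fin 3 → F) // Module.finrank F W = 2} → ZMod 2, x ≠ 0 →
      (∀ p : {W : Submodule F (Fin 3 → F) // Module.finrank F W = 1},
        (∑ ℓ : {W : Submodule F (Fin 3 → F) // Module.finrank F W = 2},
          if p.1 ≤ ℓ.1 then x ℓ else 0) = 0) →
      2 ^ h + 2 ≤ hammingNorm x) ∧
    (∃ x : {W : Submodule F (Fin 3 → F) // Module.finrank F W = 2} → ZMod 2, x ≠ 0 ∧
      (∀ p : {W : Submodule F (Fin 3 → F) // Module.finrank F W = 1},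
        (∑ ℓ : {W : Submodule F (Fin 3 → F) // Module.finrank F W = 2},
          if p.1 ≤ ℓ.1 then x ℓ else 0) = 0) ∧
      hammingNorm x = 2 ^ h + 2) :=
  statement_3_general h F hF
end

section
/- Let q ≥ 2, let (P, L) be a finite projective plane of order q, and let B be a projective bundle of ovals in it. Then any two distinct points of P lie on exactly one common oval of B; in particular, the points of P together with the ovals of B (as lines) form a projective plane of order q, and every point lies on exactly q+1 ovals of B. -/
open Finset

lemma Finset.card_filter_eq_one_of_existsUnique {α : Type*} {s : Finset α} {p : α → Prop}
    [DecidablePred p] (h : ∃! a, a ∈ s ∧ p a) : #(s.filter p) = 1 := by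
  rw [card_eq_one_iff_existsUnique]
  simpa only [mem_filter] using h

section Blocks

variable {P : Type} [DecidableEq P]

def JoinsUniquely (B : Finset (Finset P)) : Prop :=
  ∀ p₁ p₂ : P, p₁ ≠ p₂ → ∃! o, o ∈ B ∧ p₁ ∈ o ∧ p₂ ∈ o

lemma eq_of_card_inter_le_one_of_ne {B : Finset (Finset P)}
    (hmeet : ∀ o₁ ∈ B, ∀ o₂ ∈ B, o₁ ≠ o₂ → #(o₁ ∩ o₂) ≤ 1)
    {o₁ o₂ : Finset P} (h₁ : o₁ ∈ B) (h₂ : o₂ ∈ B) {p₁ p₂ : P} (hne : p₁ ≠ p₂)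
    (hp₁ : p₁ ∈ o₁ ∧ p₁ ∈ o₂) (hp₂ : p₂ ∈ o₁ ∧ p₂ ∈ o₂) : o₁ = o₂ := by
  by_contra ho
  have hsub : {p₁, p₂} ⊆ o₁ ∩ o₂ := by
    simp only [insert_subset_iff, singleton_subset_iff, mem_inter]
    exact ⟨hp₁, hp₂⟩
  have := card_le_card hsub
  rw [card_pair hne] at this
  have := hmeet o₁ h₁ o₂ h₂ ho
  omega

lemma joinsUniquely_of_card_le [Fintype P] {B : Finset (Finset P)} {k : ℕ}
    (hmeet : ∀ o₁ ∈ B, ∀ o₂ ∈ B, o₁ ≠ o₂ → #(o₁ ∩ o₂) ≤ 1) (hcard : ∀ o ∈ B, #o = k)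
    (hcount : Fintype.card P * Fintype.card P - Fintype.card P ≤ #B * (k * k - k)) :
    JoinsUniquely B := by
  have hdisj : (B : Set (Finset P)).PairwiseDisjoint offDiag := by
    intro o₁ h₁ o₂ h₂ hne
    rw [Function.onFun, disjoint_left]
    rintro ⟨x, y⟩ hx hy
    rw [mem_offDiag] at hx hy
    exact hne (eq_of_card_inter_le_one_of_ne hmeet h₁ h₂ hx.2.2 ⟨hx.1, hy.1⟩
      ⟨hx.2.1, hy.2.1⟩)
  have hcover : B.biUnion offDiag = (univ : Finset P).offDiag := by
    refine eq_of_subset_of_card_le (fun z hz => ?_) ?_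
    · obtain ⟨o, -, hz⟩ := mem_biUnion.1 hz
      simpa using (mem_offDiag.1 hz).2.2
    · rw [card_biUnion hdisj, sum_congr rfl fun o ho => by rw [offDiag_card, hcard o ho],
        sum_const, smul_eq_mul, offDiag_card, card_univ]
      exact hcount
  intro p₁ p₂ hne
  have hmem : (p₁, p₂) ∈ B.biUnion offDiag := by simp [hcover, hne]
  obtain ⟨o, ho, hpo⟩ := mem_biUnion.1 hmem
  rw [mem_offDiag] at hpo
  exact ⟨o, ⟨ho, hpo.1, hpo.2.1⟩, fun o' ⟨ho', hp₁, hp₂⟩ =>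
    eq_of_card_inter_le_one_of_ne hmeet ho' ho hne ⟨hp₁, hpo.1⟩ ⟨hp₂, hpo.2.1⟩⟩

lemma card_filter_mem_mul_eq [Fintype P] {B : Finset (Finset P)} {k : ℕ} (hB : JoinsUniquely B)
    (hcard : ∀ o ∈ B, #o = k + 1) (p : P) :
    #(B.filter (p ∈ ·)) * k = Fintype.card P - 1 := by
  have := card_mul_eq_card_mul (fun x o => x ∈ o) (s := univ.erase p) (t := B.filter (p ∈ ·))
    (m := 1) (n := k) (fun x hx => card_filter_eq_one_of_existsUnique ?_) (fun o ho => ?_)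
  · rw [card_erase_of_mem (mem_univ p), card_univ] at this
    omega
  · simpa only [mem_filter, and_assoc] using hB p x (ne_of_mem_erase hx).symm
  · rw [mem_filter] at ho
    have hbelow : (univ.erase p).bipartiteBelow (fun x o => x ∈ o) o = o.erase p := by
      ext x
      simp [bipartiteBelow, and_comm]
    rw [hbelow, card_erase_of_mem ho.2, hcard o ho.1, Nat.add_sub_cancel]

lemma card_inter_le_two_of_no_three_mem {ℓ : Finset P} {a b c d : P}
    (habc : ¬(a ∈ ℓ ∧ b ∈ ℓ ∧ c ∈ ℓ)) (habd : ¬(a ∈ ℓ ∧ b ∈ ℓ ∧ d ∈ ℓ))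
    (hacd : ¬(a ∈ ℓ ∧ c ∈ ℓ ∧ d ∈ ℓ)) (hbcd : ¬(b ∈ ℓ ∧ c ∈ ℓ ∧ d ∈ ℓ)) :
    #(ℓ ∩ {a, b, c, d}) ≤ 2 := by
  rw [← not_lt, two_lt_card_iff]
  rintro ⟨x, y, z, hx, hy, hz, hxy, hxz, hyz⟩
  simp only [mem_inter, mem_insert, mem_singleton] at hx hy hz
  obtain ⟨hx, rfl | rfl | rfl | rfl⟩ := hx <;> obtain ⟨hy, rfl | rfl | rfl | rfl⟩ := hy <;>
    obtain ⟨hz, rfl | rfl | rfl | rfl⟩ := hz <;> tauto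

lemma exists_quadrangle [Fintype P] {B : Finset (Finset P)} {q : ℕ} (hB : JoinsUniquely B)
    (hcard : ∀ o ∈ B, #o = q + 1) (hq : 1 ≤ q) (hP : 3 * q < Fintype.card P) :
    ∃ a b c d : P, a ≠ b ∧ a ≠ c ∧ a ≠ d ∧ b ≠ c ∧ b ≠ d ∧ c ≠ d ∧
      ∀ ℓ ∈ B, #(ℓ ∩ {a, b, c, d}) ≤ 2 := by
  obtain ⟨a, b, hab⟩ := Fintype.exists_pair_of_one_lt_card (α := P) (by omega)
  obtain ⟨oab, ⟨hoab, haab, hbab⟩, huab⟩ := hB a b hab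
  obtain ⟨c, -, hc⟩ := exists_mem_notMem_of_card_lt_card (s := oab) (t := univ)
    (by rw [hcard oab hoab, card_univ]; omega)
  have hac : a ≠ c := by rintro rfl; exact hc haab
  have hbc : b ≠ c := by rintro rfl; exact hc hbab
  obtain ⟨oac, ⟨hoac, haac, hcac⟩, huac⟩ := hB a c hac
  obtain ⟨obc, ⟨hobc, hbbc, hcbc⟩, hubc⟩ := hB b c hbc
  -- this set is `oab ∪ oac ∪ obc`, written so that its size is easy to bound
  have hcover : #(oab ∪ oac.erase a ∪ obc \ {b, c}) ≤ 3 * q := by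
    have hbc_sub : {b, c} ⊆ obc := by simp [insert_subset_iff, hbbc, hcbc]
    calc #(oab ∪ oac.erase a ∪ obc \ {b, c})
        ≤ #oab + #(oac.erase a) + #(obc \ {b, c}) :=
          (card_union_le _ _).trans (Nat.add_le_add_right (card_union_le _ _) _)
      _ = 3 * q := by
          rw [card_erase_of_mem haac, card_sdiff_of_subset hbc_sub, card_pair hbc,
            hcard oab hoab, hcard oac hoac, hcard obc hobc]
          omega
  obtain ⟨d, -, hd⟩ := exists_mem_notMem_of_card_lt_card (t := univ)
    (hcover.trans_lt (by rwa [card_univ]))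
  simp only [mem_union, mem_erase, mem_sdiff, mem_insert, mem_singleton, not_or, not_and,
    not_not] at hd
  obtain ⟨⟨hdab, hdac⟩, hdbc⟩ := hd
  have had : a ≠ d := by rintro rfl; exact hdab haab
  have hbd : b ≠ d := by rintro rfl; exact hdab hbab
  have hdac : d ∉ oac := hdac (Ne.symm had)
  have hcd : c ≠ d := by rintro rfl; exact hdac hcac
  have hdbc : d ∉ obc := fun h => hcd (hdbc h (Ne.symm hbd)).symm
  refine ⟨a, b, c, d, hab, hac, had, hbc, hbd, hcd, fun ℓ hℓ => ?_⟩
  apply card_inter_le_two_of_no_three_mem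
  · rintro ⟨ha, hb, hc'⟩; exact hc (huab ℓ ⟨hℓ, ha, hb⟩ ▸ hc')
  · rintro ⟨ha, hb, hd⟩; exact hdab (huab ℓ ⟨hℓ, ha, hb⟩ ▸ hd)
  · rintro ⟨ha, hc', hd⟩; exact hdac (huac ℓ ⟨hℓ, ha, hc'⟩ ▸ hd)
  · rintro ⟨hb, hc', hd⟩; exact hdbc (hubc ℓ ⟨hℓ, hb, hc'⟩ ▸ hd)

lemma isProjectivePlane_of_joinsUniquely [Fintype P] {q : ℕ} {B : Finset (Finset P)}
    (hq : 2 ≤ q) (hP : Fintype.card P = q ^ 2 + q + 1)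
    (hB : JoinsUniquely B) (hmeet : ∀ o₁ ∈ B, ∀ o₂ ∈ B, o₁ ≠ o₂ → #(o₁ ∩ o₂) = 1)
    (hcard : ∀ o ∈ B, #o = q + 1) : IsProjectivePlane q B where
  exists_unique_line := hB
  exists_unique_point o₁ h₁ o₂ h₂ hne := by
    simpa only [mem_inter] using card_eq_one_iff_existsUnique.1 (hmeet o₁ h₁ o₂ h₂ hne)
  nondeg := exists_quadrangle hB hcard (by omega) (by rw [hP]; nlinarith)
  card_line := hcard

end Blocks

namespace IsProjectivePlane

variable {q : ℕ} {P : Type} [DecidableEq P] {L : Finset (Finset P)}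

lemma exists_notMem (hL : IsProjectivePlane q L) {ℓ : Finset P} (hℓ : ℓ ∈ L) : ∃ c, c ∉ ℓ := by
  obtain ⟨a, b, c, d, hab, hac, had, hbc, hbd, hcd, hquad⟩ := hL.nondeg
  by_contra! h
  have := hquad ℓ hℓ
  rw [inter_eq_right.2 fun x _ => h x, card_insert_of_notMem (by simp [hab, hac, had]),
    card_insert_of_notMem (by simp [hbc, hbd]), card_pair hcd] at this
  omega

lemma card_filter_mem_of_notMem (hL : IsProjectivePlane q L) {ℓ : Finset P} (hℓ : ℓ ∈ L)
    {c : P} (hc : c ∉ ℓ) : #(L.filter (c ∈ ·)) = q + 1 := by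
  have := card_mul_eq_card_mul (fun x m => x ∈ m) (s := ℓ) (t := L.filter (c ∈ ·))
    (m := 1) (n := 1) (fun x hx => card_filter_eq_one_of_existsUnique ?_)
    (fun m hm => card_filter_eq_one_of_existsUnique ?_)
  · rwa [mul_one, mul_one, hL.card_line ℓ hℓ, eq_comm] at this
  · simpa only [mem_filter, and_assoc] using
      hL.exists_unique_line c x (by rintro rfl; exact hc hx)
  · rw [mem_filter] at hm
    exact hL.exists_unique_point ℓ hℓ m hm.1 (by rintro rfl; exact hc hm.2)

lemma card_points [Fintype P] (hL : IsProjectivePlane q L) :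
    Fintype.card P = q ^ 2 + q + 1 := by
  obtain ⟨a, b, -, -, hab, -⟩ := hL.nondeg
  obtain ⟨ℓ, ⟨hℓ, -⟩, -⟩ := hL.exists_unique_line a b hab
  obtain ⟨c, hc⟩ := hL.exists_notMem hℓ
  have hpencil := card_filter_mem_mul_eq hL.exists_unique_line hL.card_line c
  rw [hL.card_filter_mem_of_notMem hℓ hc, add_one_mul] at hpencil
  have := Fintype.card_pos_iff.2 ⟨c⟩
  rw [sq]
  omega

end IsProjectivePlane

/-- For a projective bundle `B` in a finite projective plane of order `q ≥ 2`,
any two distinct points lie on exactly one common oval of `B`; in particular the points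
together with the ovals of `B` form a projective plane of order `q`, and every point lies
on exactly `q + 1` ovals of `B`. -/
theorem statement_7 (q : ℕ) (hq : 2 ≤ q) (P : Type) [Fintype P] [DecidableEq P]
    (L : Finset (Finset P)) (hL : IsProjectivePlane q L)
    (B : Finset (Finset P)) (hB : IsProjectiveBundle q L B) :
    (∀ p₁ p₂ : P, p₁ ≠ p₂ → ∃! o, o ∈ B ∧ p₁ ∈ o ∧ p₂ ∈ o) ∧
    IsProjectivePlane q B ∧
    (∀ p : P, (B.filter fun o => p ∈ o).card = q + 1) := by
  obtain ⟨hBcard, hoval, hmeet⟩ := hB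
  have hP := hL.card_points
  have hcard : ∀ o ∈ B, #o = q + 1 := fun o ho => (hoval o ho).1
  have hjoin : JoinsUniquely B :=
    joinsUniquely_of_card_le (fun o₁ h₁ o₂ h₂ hne => (hmeet o₁ h₁ o₂ h₂ hne).le) hcard
      (by rw [hBcard, hP, ← Nat.mul_sub_one, ← Nat.mul_sub_one, Nat.add_sub_cancel,
        Nat.add_sub_cancel]; exact Nat.le_of_eq (by ring))
  refine ⟨hjoin, isProjectivePlane_of_joinsUniquely hq hP hjoin hmeet hcard, fun p => ?_⟩
  have hpencil := card_filter_mem_mul_eq hjoin hcard p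
  rw [hP, Nat.add_sub_cancel] at hpencil
  exact Nat.eq_of_mul_eq_mul_right (by omega : 0 < q) (by rw [hpencil]; ring)
end
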